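/- arXiv:2410.21224 — 4 statements merged into one kernel-verified Lean document; each statement's English description precedes it below -/
import Mathlib

section
/- The Artin-Hasse exponential E_p(t) = exp(Σ_{i≥0} t^{p^i}/p^i) has all coefficients in ℤ_(p), i.e., E_p(t) ∈ ℤ_(p)⟦t⟧. -/
open PowerSeries Classical

/-- Formal exponential `exp f = Σ_n f^n / n!` of a power series `f` (intended for `f` with
zero constant term, in which case each coefficient is the indicated finite sum). -/
noncomputable def pexp {K : Type} [Field K] [CharZero K] (f : PowerSeries K) :
    PowerSeries K :=
  PowerSeries.mk fun d =>
    ∑ n ∈ Finset.range (d + 1), PowerSeries.coeff (R := K) d (f ^ n) / (Nat.factorial n : K)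

/-- The series `Σ_{i ≥ 0} t^{p^i}/p^i`: its coefficient at `t^n` is `1/n` if `n` is a
positive power of `p` (including `p^0 = 1`) and `0` otherwise. -/
noncomputable def AHlog (p : ℕ) (K : Type) [Field K] [CharZero K] : PowerSeries K :=
  PowerSeries.mk fun n => if 0 < n ∧ ∃ i : ℕ, n = p ^ i then (n : K)⁻¹ else 0

/-- The Artin–Hasse exponential `E_p(t) = exp (Σ_{i≥0} t^{p^i}/p^i)`. -/
noncomputable def AH (p : ℕ) (K : Type) [Field K] [CharZero K] : PowerSeries K :=
  pexp (AHlog p K)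

/-!
Dwork's argument. The series `L = Σ t^{p^i}/p^i` satisfies `L(t^p) = p L(t) - p t`, so
`E = exp L` satisfies `E(t^p) = E(t)^p · exp(-p t)`, and `exp(-p t) ≡ 1 (mod p)` because
`v_p(j!) < j`. By induction on `n`: if `a_0, …, a_{n-1}` are `p`-integral, let `A ∈ ℤ_p[t]` be the
truncation of `E` below degree `n`. Comparing coefficients of `t^n` gives
`p a_n = [A(t^p) - A(t)^p]_n - [A(t)^p (exp(-p t) - 1)]_n`, and both terms are divisible by `p`,
the first by the Frobenius congruence `A(t^p) ≡ A(t)^p (mod p)`.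
-/

open Finset Nat

namespace PowerSeries

variable {R : Type*} [CommRing R]

theorem X_pow_dvd_pow_of_constantCoeff_eq_zero {f : R⟦X⟧}
    (hf : constantCoeff f = 0) (n : ℕ) : X ^ n ∣ f ^ n :=
  pow_dvd_pow_of_dvd (X_dvd_iff.mpr hf) n

theorem coeff_eq_of_X_pow_dvd_sub {f g : R⟦X⟧} {m i : ℕ} (h : X ^ m ∣ f - g) (hi : i < m) :
    coeff i f = coeff i g :=
  sub_eq_zero.1 (by rw [← map_sub]; exact X_pow_dvd_iff.1 h i hi)

theorem coeff_mul_of_X_pow_dvd (f : R⟦X⟧) {g : R⟦X⟧} {n : ℕ} (h : X ^ n ∣ g) :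
    coeff n (f * g) = constantCoeff f * coeff n g := by
  obtain ⟨g, rfl⟩ := h
  rw [mul_left_comm, coeff_X_pow_mul', coeff_X_pow_mul', if_pos le_rfl, if_pos le_rfl,
    Nat.sub_self, coeff_zero_eq_constantCoeff_apply, coeff_zero_eq_constantCoeff_apply, map_mul]

theorem coeff_add_pow_of_X_pow_dvd {A B : R⟦X⟧} {n : ℕ} (hn : 0 < n)
    (hA : constantCoeff A = 1) (hB : X ^ n ∣ B) (m : ℕ) :
    coeff n ((A + B) ^ m) = coeff n (A ^ m) + m * coeff n B := by
  have hB2 : X ^ (n * 2) ∣ B ^ 2 := pow_mul (X : R⟦X⟧) n 2 ▸ pow_dvd_pow_of_dvd hB 2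
  have hsq := X_pow_dvd_iff.1 (hB2.trans (sq_dvd_add_pow_sub_sub B A m)) n (by omega)
  have hlin : coeff n (A ^ (m - 1) * B * (m : R⟦X⟧)) = m * coeff n B := by
    rw [mul_comm, ← mul_assoc, coeff_mul_of_X_pow_dvd _ hB, map_mul, map_pow, hA, one_pow,
      mul_one, map_natCast]
  rw [map_sub, map_sub, hlin] at hsq
  linear_combination hsq

theorem expand_coe (p : ℕ) (hp : p ≠ 0) (f : Polynomial R) :
    expand p hp (f : R⟦X⟧) = ((Polynomial.expand R p f : Polynomial R) : R⟦X⟧) := by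
  ext n
  rw [coeff_expand, Polynomial.coeff_coe, Polynomial.coeff_coe,
    Polynomial.coeff_expand (Nat.pos_of_ne_zero hp)]

theorem norm_coeff_mul_le {S : Type*} [NormedCommRing S] [IsUltrametricDist S]
    {f g : S⟦X⟧} {a b : ℝ} (hf : ∀ i, ‖coeff i f‖ ≤ a) (hg : ∀ j, ‖coeff j g‖ ≤ b) (n : ℕ) :
    ‖coeff n (f * g)‖ ≤ a * b := by
  have ha : 0 ≤ a := (norm_nonneg _).trans (hf 0)
  have hb : 0 ≤ b := (norm_nonneg _).trans (hg 0)
  rw [coeff_mul]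
  refine IsUltrametricDist.norm_sum_le_of_forall_le_of_nonneg (mul_nonneg ha hb) fun x _ => ?_
  exact (norm_mul_le _ _).trans (mul_le_mul (hf _) (hg _) (norm_nonneg _) ha)

end PowerSeries

section Exponential

variable {K : Type} [Field K] [CharZero K]

theorem coeff_pexp (f : K⟦X⟧) (d : ℕ) :
    coeff d (pexp f) = ∑ n ∈ range (d + 1), coeff d (f ^ n) / n ! :=
  coeff_mk _ _

theorem coeff_pexp_of_lt {f : K⟦X⟧} (hf : constantCoeff f = 0) {d N : ℕ} (h : d < N) :
    coeff d (pexp f) = ∑ n ∈ range N, coeff d (f ^ n) / n ! := by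
  rw [coeff_pexp]
  refine sum_subset (range_subset_range.2 h) fun n _ hnd => ?_
  rw [X_pow_dvd_iff.mp (X_pow_dvd_pow_of_constantCoeff_eq_zero hf n) d (by simp_all), zero_div]

theorem constantCoeff_pexp (f : K⟦X⟧) : constantCoeff (pexp f) = 1 := by
  rw [← coeff_zero_eq_constantCoeff_apply, coeff_pexp]
  simp

theorem pexp_add {f g : K⟦X⟧} (hf : constantCoeff f = 0) (hg : constantCoeff g = 0) :
    pexp (f + g) = pexp f * pexp g := by
  ext d
  set t : ℕ → ℕ → K := fun k j => coeff d (f ^ k * g ^ j) / (k ! * j !)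
  have ht : ∀ k j, d < k + j → t k j = 0 := fun k j h => by
    have hdvd : X ^ (k + j) ∣ f ^ k * g ^ j := pow_add (X : K⟦X⟧) k j ▸
      mul_dvd_mul (X_pow_dvd_pow_of_constantCoeff_eq_zero hf k)
        (X_pow_dvd_pow_of_constantCoeff_eq_zero hg j)
    simp only [t, X_pow_dvd_iff.mp hdvd d h, zero_div]
  have hsum :
      coeff d (pexp (f + g)) = ∑ n ∈ range (d + 1), ∑ k ∈ range (n + 1), t k (n - k) := by
    rw [coeff_pexp]
    refine sum_congr rfl fun n _ => ?_
    rw [add_pow, map_sum, sum_div]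
    refine sum_congr rfl fun k hk => ?_
    rw [← map_natCast (C (R := K)), coeff_mul_C,
      Nat.cast_choose K (by simpa [Nat.lt_succ_iff] using hk)]
    have : (n ! : K) ≠ 0 := Nat.cast_ne_zero.2 n.factorial_ne_zero
    simp only [t]
    field_simp
  have hprod :
      coeff d (pexp f * pexp g) = ∑ k ∈ range (d + 1), ∑ j ∈ range (d + 1), t k j := by
    simp only [t, coeff_mul, sum_div]
    conv_rhs => enter [2, k]; rw [sum_comm]
    rw [sum_comm]
    refine sum_congr rfl fun x hx => ?_
    rw [HasAntidiagonal.mem_antidiagonal] at hx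
    rw [coeff_pexp_of_lt hf (N := d + 1) (by omega), coeff_pexp_of_lt hg (N := d + 1) (by omega),
      sum_mul_sum]
    refine sum_congr rfl fun k _ => sum_congr rfl fun j _ => ?_
    field_simp
  rw [hsum, hprod, sum_range_diag_flip]
  refine sum_congr rfl fun k hk => sum_subset (range_subset_range.2 (by omega)) fun j _ hj => ?_
  exact ht k j (by simp_all; omega)

theorem pexp_zero : pexp (0 : K⟦X⟧) = 1 := by
  have h : pexp (0 : K⟦X⟧) * pexp 0 = pexp 0 * 1 := by
    rw [mul_one, ← pexp_add (map_zero _) (map_zero _), add_zero]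
  refine mul_left_cancel₀ (fun h0 => ?_) h
  simpa [h0] using constantCoeff_pexp (0 : K⟦X⟧)

theorem pexp_nsmul {f : K⟦X⟧} (hf : constantCoeff f = 0) (m : ℕ) :
    pexp (m • f) = pexp f ^ m := by
  induction m with
  | zero => rw [zero_smul, pexp_zero, pow_zero]
  | succ m ih => rw [succ_nsmul, pexp_add (by simp [hf]) hf, ih, pow_succ]

theorem coeff_pexp_smul_X (c : K) (m : ℕ) : coeff m (pexp (c • X)) = c ^ m / m ! := by
  rw [coeff_pexp, sum_eq_single_of_mem m (self_mem_range_succ m)]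
  · rw [smul_pow, map_smul, coeff_X_pow_self, smul_eq_mul, mul_one]
  · intro n _ hn
    rw [smul_pow, map_smul, coeff_X_pow, if_neg (Ne.symm hn), smul_zero, zero_div]

theorem expand_pexp (p : ℕ) (hp : p ≠ 0) {f : K⟦X⟧} (hf : constantCoeff f = 0) :
    expand p hp (pexp f) = pexp (expand p hp f) := by
  ext d
  simp only [coeff_expand, coeff_pexp, ← map_pow]
  split_ifs with h
  · rw [← coeff_pexp, coeff_pexp_of_lt hf (lt_succ_of_le (div_le_self d p))]
  · simp

theorem map_pexp {L : Type} [Field L] [CharZero L] (σ : K →+* L) (f : K⟦X⟧) :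
    map σ (pexp f) = pexp (map σ f) := by
  ext d
  simp [coeff_pexp, ← map_pow]

end Exponential

section ArtinHasse

variable {p : ℕ} {K : Type} [Field K] [CharZero K]

theorem coeff_AHlog (n : ℕ) :
    coeff n (AHlog p K) = if 0 < n ∧ ∃ i : ℕ, n = p ^ i then (n : K)⁻¹ else 0 :=
  coeff_mk _ _

theorem constantCoeff_AHlog : constantCoeff (AHlog p K) = 0 := by
  rw [← coeff_zero_eq_constantCoeff_apply, coeff_AHlog, if_neg (by simp)]

theorem map_AHlog {L : Type} [Field L] [CharZero L] (σ : K →+* L) :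
    map σ (AHlog p K) = AHlog p L := by
  ext n
  simp [coeff_AHlog, apply_ite σ]

theorem pos_and_exists_eq_pow_iff (hp : 1 < p) {n : ℕ} (hn : n ≠ 1) :
    (0 < n ∧ ∃ i, n = p ^ i) ↔ p ∣ n ∧ 0 < n / p ∧ ∃ i, n / p = p ^ i := by
  constructor
  · rintro ⟨-, i, rfl⟩
    obtain ⟨j, rfl⟩ : ∃ j, i = j + 1 :=
      exists_eq_add_one.2 (Nat.pos_of_ne_zero (by rintro rfl; simp at hn))
    rw [pow_succ, Nat.mul_div_cancel _ (by omega)]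
    exact ⟨dvd_mul_left p _, by positivity, j, rfl⟩
  · rintro ⟨⟨m, rfl⟩, hm, j, hj⟩
    rw [Nat.mul_div_cancel_left _ (by omega)] at hm hj
    exact ⟨by positivity, j + 1, by rw [hj, pow_succ']⟩

theorem expand_AHlog (hp : 1 < p) :
    expand p (Nat.ne_zero_of_lt hp) (AHlog p K) + (p : K) • X = (p : K) • AHlog p K := by
  ext n
  simp only [map_add, map_smul, coeff_expand, coeff_AHlog, coeff_X, smul_eq_mul]
  rcases eq_or_ne n 1 with rfl | hn
  · rw [if_neg (Nat.not_dvd_of_pos_of_lt one_pos hp),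
      if_pos (⟨one_pos, 0, (pow_zero p).symm⟩ : 0 < 1 ∧ ∃ i, 1 = p ^ i)]
    simp
  simp only [if_neg hn, mul_zero, add_zero, pos_and_exists_eq_pow_iff hp hn]
  split_ifs with hdvd
  · obtain ⟨m, rfl⟩ := hdvd
    rw [Nat.mul_div_cancel_left _ (by omega), cast_mul, mul_inv, ← mul_assoc,
      mul_inv_cancel₀ (by simp; omega), one_mul]
  all_goals simp_all

theorem expand_AH (hp : 1 < p) :
    expand p (Nat.ne_zero_of_lt hp) (AH p K) = AH p K ^ p * pexp (-(p : K) • X) := by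
  have hX : constantCoeff ((p : K) • (X : K⟦X⟧)) = 0 := by simp
  rw [AH, ← pexp_nsmul constantCoeff_AHlog, ← Nat.cast_smul_eq_nsmul K p (AHlog p K),
    ← expand_AHlog hp, pexp_add (by simp [constantCoeff_AHlog]) hX,
    expand_pexp _ _ constantCoeff_AHlog, mul_assoc,
    ← pexp_add hX (by simp), ← add_smul, add_neg_cancel, zero_smul, pexp_zero, mul_one]

end ArtinHasse

section Padic

variable {p : ℕ} [hp : Fact p.Prime]

theorem PadicInt.norm_le_inv_of_toZMod_eq_zero {x : ℤ_[p]} (hx : PadicInt.toZMod x = 0) :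
    ‖x‖ ≤ (p : ℝ)⁻¹ := by
  have hx1 : ‖x‖ < 1 := by
    rw [← PadicInt.mem_nonunits, ← IsLocalRing.mem_maximalIdeal, ← PadicInt.ker_toZMod]
    exact hx
  rw [← zpow_neg_one, PadicInt.norm_le_pow_iff_norm_lt_pow_add_one]
  simpa using hx1

theorem norm_coeff_expand_sub_pow_le (P : Polynomial ℤ_[p]) (k : ℕ) :
    ‖coeff k (expand p hp.out.ne_zero (P.map PadicInt.Coe.ringHom : ℚ_[p]⟦X⟧)
      - (P.map PadicInt.Coe.ringHom : ℚ_[p]⟦X⟧) ^ p)‖ ≤ (p : ℝ)⁻¹ := by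
  rw [expand_coe, ← Polynomial.coe_pow, ← Polynomial.coe_sub, Polynomial.coeff_coe,
    ← Polynomial.map_expand, ← Polynomial.map_pow, ← Polynomial.map_sub, Polynomial.coeff_map]
  refine PadicInt.norm_le_inv_of_toZMod_eq_zero ?_
  rw [← Polynomial.coeff_map, Polynomial.map_sub, Polynomial.map_pow, Polynomial.map_expand,
    ZMod.expand_card, sub_self, Polynomial.coeff_zero]

theorem exists_map_eq_trunc_of_norm_coeff_le_one {F : ℚ_[p]⟦X⟧} {n : ℕ}
    (hF : ∀ m < n, ‖coeff m F‖ ≤ 1) :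
    ∃ P : Polynomial ℤ_[p], P.map PadicInt.Coe.ringHom = trunc n F := by
  refine (Polynomial.lifts_iff_coeff_lifts _).2 fun k => ?_
  rw [coeff_trunc]
  split_ifs with hk
  · exact ⟨⟨_, hF k hk⟩, rfl⟩
  · exact ⟨0, map_zero _⟩

/-- One direction of Dwork's lemma. -/
theorem norm_coeff_le_one_of_expand_eq_pow_mul {F G : ℚ_[p]⟦X⟧} (hF : constantCoeff F = 1)
    (hG : constantCoeff G = 1) (hGp : ∀ j, ‖coeff j (G - 1)‖ ≤ (p : ℝ)⁻¹)
    (h : expand p hp.out.ne_zero F = F ^ p * G) (n : ℕ) : ‖coeff n F‖ ≤ 1 := by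
  induction n using Nat.strong_induction_on with | _ n IH =>
  rcases Nat.eq_zero_or_pos n with rfl | hn
  · simp [hF]
  obtain ⟨P, hP⟩ := exists_map_eq_trunc_of_norm_coeff_le_one IH
  set A : ℚ_[p]⟦X⟧ := ↑(P.map PadicInt.Coe.ringHom) with hA
  have hA_coeff (i : ℕ) : coeff i A = if i < n then coeff i F else 0 := by
    rw [hA, hP, Polynomial.coeff_coe, coeff_trunc]
  have hFA : X ^ n ∣ F - A := X_pow_dvd_iff.2 fun i hi => by
    rw [map_sub, hA_coeff, if_pos hi, sub_self]
  have hAn : coeff n A = 0 := by rw [hA_coeff, if_neg (lt_irrefl n)]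
  have hA0 : constantCoeff A = 1 := by
    rw [← coeff_zero_eq_constantCoeff_apply, hA_coeff, if_pos hn,
      coeff_zero_eq_constantCoeff_apply, hF]
  have hApow (k : ℕ) : ‖coeff k (A ^ p)‖ ≤ 1 := by
    rw [hA, ← Polynomial.coe_pow, ← Polynomial.map_pow, Polynomial.coeff_coe,
      Polynomial.coeff_map]
    exact PadicInt.norm_le_one _
  have hexpand : coeff n (expand p hp.out.ne_zero F) = coeff n (expand p hp.out.ne_zero A) := by
    obtain ⟨Q, hQ⟩ := hFA
    refine coeff_eq_of_X_pow_dvd_sub (m := p * n) ⟨expand p hp.out.ne_zero Q, ?_⟩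
      (lt_mul_left hn hp.out.one_lt)
    rw [← map_sub, hQ, map_mul, map_pow, expand_X, pow_mul]
  have hpow : coeff n (F ^ p) = coeff n (A ^ p) + p * coeff n F := by
    have := coeff_add_pow_of_X_pow_dvd hn hA0 hFA p
    rwa [add_sub_cancel, map_sub, hAn, sub_zero] at this
  have htail : coeff n (F ^ p * (G - 1)) = coeff n (A ^ p * (G - 1)) := by
    refine coeff_eq_of_X_pow_dvd_sub (m := n + 1) ?_ (lt_add_one n)
    rw [← sub_mul, pow_succ]
    exact mul_dvd_mul (hFA.trans (sub_dvd_pow_sub_pow F A p)) (X_dvd_iff.2 (by simp [hG]))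
  have hkey : (p : ℚ_[p]) * coeff n F
      = coeff n (expand p hp.out.ne_zero A - A ^ p) - coeff n (A ^ p * (G - 1)) := by
    have := congr_arg (coeff n) h
    rw [← add_sub_cancel 1 G, mul_add, mul_one, map_add, hexpand, hpow, htail] at this
    rw [map_sub]
    linear_combination -this
  have hbound : ‖(p : ℚ_[p]) * coeff n F‖ ≤ (p : ℝ)⁻¹ := by
    rw [hkey, sub_eq_add_neg]
    refine (Padic.nonarchimedean _ _).trans (max_le (norm_coeff_expand_sub_pow_le P n) ?_)
    simpa using norm_coeff_mul_le hApow hGp n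
  rw [norm_mul, Padic.norm_p] at hbound
  exact le_of_mul_le_mul_left (by simpa using hbound)
    (inv_pos.2 (Nat.cast_pos.2 hp.out.pos))

theorem Padic.norm_p_pow_div_factorial_le {j : ℕ} (hj : j ≠ 0) :
    ‖(p : ℚ_[p]) ^ j / (j ! : ℚ_[p])‖ ≤ (p : ℝ)⁻¹ := by
  have hv := padicValNat_factorial_lt_of_ne_zero p hj
  rw [norm_div, Padic.norm_p_pow,
    Padic.norm_eq_zpow_neg_valuation (Nat.cast_ne_zero.2 j.factorial_ne_zero),
    Padic.valuation_natCast, ← zpow_sub₀ (Nat.cast_ne_zero.2 hp.out.ne_zero), ← zpow_neg_one]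
  exact zpow_le_zpow_right₀ (one_le_cast.2 hp.out.one_lt.le) (by omega)

theorem norm_coeff_pexp_neg_p_smul_X_sub_one_le (j : ℕ) :
    ‖coeff j (pexp (-(p : ℚ_[p]) • (X : ℚ_[p]⟦X⟧)) - 1)‖ ≤ (p : ℝ)⁻¹ := by
  rcases eq_or_ne j 0 with rfl | hj
  · simp [constantCoeff_pexp]
  rw [map_sub, coeff_pexp_smul_X, coeff_one, if_neg hj, sub_zero, neg_pow, mul_div_assoc,
    norm_mul, norm_pow, norm_neg, norm_one, one_pow, one_mul]
  exact Padic.norm_p_pow_div_factorial_le hj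

end Padic

/-- The Artin–Hasse exponential `E_p(t)` has all of its coefficients in `ℤ_(p)`, i.e. every
coefficient (a rational number) has `p`-adic norm at most `1`. -/
theorem stmt_4 (p : ℕ) [hp : Fact p.Prime] (n : ℕ) :
    ‖((PowerSeries.coeff (R := ℚ) n (AH p ℚ) : ℚ) : ℚ_[p])‖ ≤ 1 := by
  have hcoeff : ((coeff n (AH p ℚ) : ℚ) : ℚ_[p]) = coeff n (AH p ℚ_[p]) := by
    rw [AH, AH, ← map_AHlog (Rat.castHom ℚ_[p]), ← map_pexp, coeff_map, eq_ratCast]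
  rw [hcoeff]
  exact norm_coeff_le_one_of_expand_eq_pow_mul (constantCoeff_pexp _) (constantCoeff_pexp _)
    norm_coeff_pexp_neg_p_smul_X_sub_one_le (expand_AH hp.out.one_lt) n
end

section
/- Let R be the ring of integers of a p-adic field with valuation ν normalized by ν(p)=1, and let f(X) = 1 + Σ_{j≥1} a_j X^j ∈ R⟦X⟧ with ν(a_j) > 0 for all j and inf_j ν(a_j) ≥ B > 0. If f(X)^p has only finitely many coefficients of valuation strictly smaller than p/(p−1), then f(X) has only finitely many coefficients of valuation strictly smaller than 1/(p−1). -/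
/-!
Given a bound `M`, pick `r > M` with `a_r ≠ 0` and `p ν(a_r) < 1 + ν(a_m)` for all later nonzero
`a_m`; this is possible because the infimum `λ` of the tail valuations satisfies `(p - 1) λ < 1`.
Split `f = P + d` with `P` the truncation of `f` in degrees `≤ r`. In the coefficient of
`X^(pr)` in `(P + d)^p`, the term `P^p` contributes exactly `a_r^p`, the term `d^p` nothing
(it starts in degree `p(r + 1)`), and each mixed term carries the factor `binom(p, i)`, divisible
by `p`, together with a coefficient of `d`, so it has valuation `> p ν(a_r)`. Hence that
coefficient of `f^p` has valuation `p ν(a_r) < p/(p-1)`, for arbitrarily large `r`.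
-/

open PowerSeries Finset

namespace AddValuation

variable {K Γ : Type*} [Field K] [AddCommGroup Γ] [LinearOrder Γ] [IsOrderedAddMonoid Γ]
  (v : K → Γ) (hmul : ∀ x y : K, x ≠ 0 → y ≠ 0 → v (x * y) = v x + v y)
  (hadd : ∀ x y : K, x ≠ 0 → y ≠ 0 → x + y ≠ 0 → min (v x) (v y) ≤ v (x + y))

open Classical in
noncomputable def ofNeZero : AddValuation K (WithTop Γ) :=
  AddValuation.of (fun x => if x = 0 then ⊤ else (v x : WithTop Γ)) (if_pos rfl)
    (by
      have := hmul 1 1 one_ne_zero one_ne_zero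
      simp_all)
    (fun x y => by
      by_cases hx : x = 0
      · simp [hx]
      by_cases hy : y = 0
      · simp [hy]
      by_cases hxy : x + y = 0
      · simp [hxy]
      simpa [hx, hy, hxy] using hadd x y hx hy hxy)
    (fun x y => by
      by_cases hx : x = 0
      · simp [hx]
      by_cases hy : y = 0
      · simp [hy]
      simp [hx, hy, hmul x y hx hy])

theorem ofNeZero_apply_of_ne_zero {x : K} (hx : x ≠ 0) :
    ofNeZero v hmul hadd x = v x := by
  simp [ofNeZero, hx]

theorem ofNeZero_eq_coe_iff {x : K} {γ : Γ} :
    ofNeZero v hmul hadd x = γ ↔ x ≠ 0 ∧ v x = γ := by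
  by_cases hx : x = 0 <;> simp [ofNeZero, hx]

theorem coe_le_ofNeZero_iff {x : K} {γ : Γ} :
    γ ≤ ofNeZero v hmul hadd x ↔ (x ≠ 0 → γ ≤ v x) := by
  by_cases hx : x = 0 <;> simp [ofNeZero, hx]

end AddValuation

theorem exists_mem_mul_lt_one_add_lowerBound {ι : Type*} {s : Set ι} {β : ι → ℚ} {q : ℚ}
    (hq : 1 ≤ q) (hbdd : BddBelow (β '' s)) {i₀ : ι} (hi₀ : i₀ ∈ s) (h : (q - 1) * β i₀ < 1) :
    ∃ i ∈ s, ∃ μ : ℚ, q * β i < 1 + μ ∧ ∀ j ∈ s, μ ≤ β j := by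
  set T : Set ℝ := Rat.cast '' (β '' s)
  have hT : BddBelow T := Rat.cast_mono.map_bddBelow hbdd
  have mem_T {i : ι} (hi : i ∈ s) : (β i : ℝ) ∈ T := ⟨β i, ⟨i, hi, rfl⟩, rfl⟩
  have hq' : (1 : ℝ) ≤ q := by exact_mod_cast hq
  have hi₀T : ((q : ℝ) - 1) * sInf T < 1 := by
    have : ((q : ℝ) - 1) * β i₀ < 1 := by exact_mod_cast h
    nlinarith [csInf_le hT (mem_T hi₀)]
  have : sInf T < (1 + sInf T) / q := by
    rw [lt_div_iff₀ (by linarith)]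
    linarith
  obtain ⟨_, ⟨_, ⟨i, hi, rfl⟩, rfl⟩, hiT⟩ := exists_lt_of_csInf_lt ⟨_, mem_T hi₀⟩ this
  rw [lt_div_iff₀ (by linarith)] at hiT
  obtain ⟨μ, hμ, hμT⟩ := exists_rat_btwn (show (q * β i - 1 : ℝ) < sInf T by linarith)
  refine ⟨i, hi, μ, by exact_mod_cast (by linarith : (q * β i : ℝ) < 1 + μ), fun j hj => ?_⟩
  exact_mod_cast hμT.le.trans (csInf_le hT (mem_T hj))

namespace PowerSeries

variable {R : Type*} [CommRing R]

theorem coeff_sub_trunc (f : R⟦X⟧) (n m : ℕ) :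
    coeff m (f - (trunc n f : R⟦X⟧)) = if m < n then 0 else coeff m f := by
  rw [_root_.map_sub, Polynomial.coeff_coe, coeff_trunc]
  split_ifs <;> simp

theorem X_pow_dvd_sub_trunc (f : R⟦X⟧) (n : ℕ) : X ^ n ∣ f - (trunc n f : R⟦X⟧) :=
  X_pow_dvd_iff.2 fun m hm => by rw [coeff_sub_trunc, if_pos hm]

theorem coeff_mul_pow_trunc_succ (f : R⟦X⟧) (p r : ℕ) :
    coeff (p * r) ((trunc (r + 1) f : R⟦X⟧) ^ p) = coeff r f ^ p := by
  rw [← Polynomial.coe_pow, Polynomial.coeff_coe,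
    Polynomial.coeff_pow_of_natDegree_le (Nat.lt_succ_iff.1 (natDegree_trunc_lt f r)),
    coeff_trunc, if_pos r.lt_succ_self]

end PowerSeries

namespace AddValuation

variable {R Γ : Type*} [CommRing R] [LinearOrderedAddCommMonoidWithTop Γ] (w : AddValuation R Γ)

theorem zero_le_map_natCast (n : ℕ) : 0 ≤ w n := by
  induction n with
  | zero => simp
  | succ n ih => push_cast; exact w.map_le_add ih w.map_one.ge

theorem le_map_choose_of_prime {p i : ℕ} (hp : p.Prime) (hi₀ : i ≠ 0) (hip : i < p) :
    w p ≤ w (p.choose i) := by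
  obtain ⟨k, hk⟩ := hp.dvd_choose_self hi₀ hip
  rw [hk, Nat.cast_mul, w.map_mul]
  exact le_add_of_nonneg_right (w.zero_le_map_natCast k)

theorem le_map_coeff_mul {φ ψ : R⟦X⟧} {s t : Γ} (hφ : ∀ m, s ≤ w (coeff m φ))
    (hψ : ∀ m, t ≤ w (coeff m ψ)) (m : ℕ) : s + t ≤ w (coeff m (φ * ψ)) := by
  rw [coeff_mul]
  refine w.map_le_sum fun ij _ => ?_
  rw [w.map_mul]
  exact add_le_add (hφ ij.1) (hψ ij.2)

theorem le_map_coeff_pow {φ : R⟦X⟧} {s : Γ} (hφ : ∀ m, s ≤ w (coeff m φ)) (k m : ℕ) :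
    k • s ≤ w (coeff m (φ ^ k)) := by
  induction k generalizing m with
  | zero => rw [zero_nsmul, pow_zero, coeff_one]; split_ifs <;> simp
  | succ k ih => rw [succ_nsmul, pow_succ]; exact w.le_map_coeff_mul ih hφ m

theorem add_le_map_coeff_pow_mul_pow_mul_choose {p i : ℕ} (hp : p.Prime) (hi₀ : i ≠ 0)
    (hip : i < p) {φ ψ : R⟦X⟧} {μ : Γ} (hφ : ∀ m, 0 ≤ w (coeff m φ))
    (hψ₀ : ∀ m, 0 ≤ w (coeff m ψ)) (hψ : ∀ m, μ ≤ w (coeff m ψ)) (m : ℕ) :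
    μ + w p ≤ w (coeff m (φ ^ i * ψ ^ (p - i) * (p.choose i : R⟦X⟧))) := by
  obtain ⟨k, hk⟩ : ∃ k, p - i = k + 1 := ⟨p - i - 1, by omega⟩
  rw [← map_natCast (C (R := R)), coeff_mul_C, w.map_mul, hk, pow_succ, ← mul_assoc]
  refine add_le_add ?_ (w.le_map_choose_of_prime hp hi₀ hip)
  simpa using w.le_map_coeff_mul (w.le_map_coeff_mul (w.le_map_coeff_pow hφ i)
    (w.le_map_coeff_pow hψ₀ k)) hψ m

theorem map_coeff_prime_mul_pow {p : ℕ} (hp : p.Prime) {f : R⟦X⟧} {r : ℕ} {μ : Γ}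
    (hf : ∀ m, 0 ≤ w (coeff m f)) (htail : ∀ m, r < m → μ ≤ w (coeff m f))
    (hr : p • w (coeff r f) < w p + μ) :
    w (coeff (p * r) (f ^ p)) = p • w (coeff r f) := by
  set P : R⟦X⟧ := (trunc (r + 1) f : R⟦X⟧)
  set d : R⟦X⟧ := f - P
  have hP (m : ℕ) : 0 ≤ w (coeff m P) := by
    rw [Polynomial.coeff_coe, coeff_trunc]
    split_ifs
    exacts [hf m, by simp]
  have hd (m : ℕ) : μ ≤ w (coeff m d) := by
    rw [coeff_sub_trunc]
    split_ifs with hm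
    exacts [by simp, htail m (by omega)]
  have hd₀ (m : ℕ) : 0 ≤ w (coeff m d) := by
    rw [coeff_sub_trunc]
    split_ifs
    exacts [by simp, hf m]
  have hterm (i : ℕ) (hi : i ∈ range p) :
      p • w (coeff r f) < w (coeff (p * r) (P ^ i * d ^ (p - i) * (p.choose i : R⟦X⟧))) := by
    obtain rfl | hi₀ := eq_or_ne i 0
    · have hdp : X ^ ((r + 1) * p) ∣ d ^ p :=
        pow_mul (X : R⟦X⟧) (r + 1) p ▸ pow_dvd_pow_of_dvd (X_pow_dvd_sub_trunc f (r + 1)) p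
      have : coeff (p * r) (d ^ p) = 0 := X_pow_dvd_iff.1 hdp _ (by nlinarith [hp.pos])
      simpa [this, lt_top_iff_ne_top] using ne_top_of_lt hr
    exact (add_comm (w p) μ ▸ hr).trans_le
      (w.add_le_map_coeff_pow_mul_pow_mul_choose hp hi₀ (mem_range.1 hi) hP hd₀ hd _)
  have hexp : f ^ p = ∑ i ∈ range p, P ^ i * d ^ (p - i) * (p.choose i : R⟦X⟧) + P ^ p := by
    rw [show f = P + d from (add_sub_cancel _ _).symm, add_pow, sum_range_succ]
    simp
  have hlt : w (coeff r f ^ p) < w (coeff (p * r)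
      (∑ i ∈ range p, P ^ i * d ^ (p - i) * (p.choose i : R⟦X⟧))) := by
    rw [w.map_pow, map_sum]
    exact w.map_lt_sum (ne_top_of_lt hr) hterm
  rw [hexp, _root_.map_add, coeff_mul_pow_trunc_succ, add_comm, w.map_add_eq_of_lt_left hlt,
    w.map_pow]

end AddValuation

theorem stmt_13_general (p : ℕ) (hp : p.Prime) (K : Type) [Field K]
    (v : K → ℚ)
    (hmul : ∀ x y : K, x ≠ 0 → y ≠ 0 → v (x * y) = v x + v y)
    (hadd : ∀ x y : K, x ≠ 0 → y ≠ 0 → x + y ≠ 0 → min (v x) (v y) ≤ v (x + y))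
    (hvp : v (p : K) = 1)
    (B : ℚ) (hB : 0 < B)
    (f : PowerSeries K) (h0 : PowerSeries.constantCoeff f = 1)
    (hcoeff : ∀ j : ℕ, 1 ≤ j → PowerSeries.coeff j f ≠ 0 →
      B ≤ v (PowerSeries.coeff j f))
    (hfin : {j : ℕ | PowerSeries.coeff j (f ^ p) ≠ 0 ∧
        v (PowerSeries.coeff j (f ^ p)) < (p : ℚ) / ((p : ℚ) - 1)}.Finite) :
    {j : ℕ | PowerSeries.coeff j f ≠ 0 ∧
        v (PowerSeries.coeff j f) < 1 / ((p : ℚ) - 1)}.Finite := by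
  open AddValuation in
  set w := ofNeZero v hmul hadd
  have hp₁ : (1 : ℚ) < p := by exact_mod_cast hp.one_lt
  have hw_coeff (m : ℕ) : 0 ≤ w (coeff m f) := by
    rcases Nat.eq_zero_or_pos m with rfl | hm
    · simp [h0]
    exact (coe_le_ofNeZero_iff v hmul hadd).2 fun h => hB.le.trans (hcoeff m hm h)
  have hw_p : 1 ≤ w p := (coe_le_ofNeZero_iff v hmul hadd).2 fun _ => hvp.ge
  by_contra hinf
  refine Set.infinite_of_forall_exists_gt (fun M => ?_) hfin
  obtain ⟨r₀, ⟨hr₀, hr₀v⟩, hMr₀⟩ := Set.Infinite.exists_gt hinf M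
  rw [lt_div_iff₀ (by linarith)] at hr₀v
  obtain ⟨r, ⟨hMr, hr⟩, μ, hrμ, hμ⟩ := exists_mem_mul_lt_one_add_lowerBound
    (s := {m | M < m ∧ coeff m f ≠ 0}) (β := fun m => v (coeff m f)) hp₁.le
    ⟨B, by rintro _ ⟨m, ⟨hm, hne⟩, rfl⟩; exact hcoeff m (by omega) hne⟩ ⟨hMr₀, hr₀⟩
    (by linarith)
  have hwr : w (coeff r f) = v (coeff r f) := ofNeZero_apply_of_ne_zero v hmul hadd hr
  have hkey := w.map_coeff_prime_mul_pow hp hw_coeff (μ := μ)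
    (fun m hm => (coe_le_ofNeZero_iff v hmul hadd).2 fun h => hμ m ⟨hMr.trans hm, h⟩) <| by
      rw [hwr, ← WithTop.coe_nsmul, nsmul_eq_mul]
      calc ((p * v (coeff r f) : ℚ) : WithTop ℚ) < (1 + μ : ℚ) := WithTop.coe_lt_coe.2 hrμ
        _ ≤ w p + μ := by rw [WithTop.coe_add, WithTop.coe_one]; gcongr
  rw [hwr, ← WithTop.coe_nsmul, ofNeZero_eq_coe_iff] at hkey
  refine ⟨p * r, ⟨hkey.1, ?_⟩, hMr.trans_le (Nat.le_mul_of_pos_left r hp.pos)⟩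
  rw [hkey.2, nsmul_eq_mul, lt_div_iff₀ (by linarith)]
  nlinarith [hμ r ⟨hMr, hr⟩]

/-- Let `K` be a `p`-adic field with additive valuation `v` normalized by `v p = 1`, and
let `f = 1 + Σ_{j≥1} a_j X^j` be a power series whose (nonzero) higher coefficients all
have valuation bounded below by some `B > 0`.  If `f^p` has only finitely many
coefficients of valuation strictly smaller than `p/(p-1)`, then `f` has only finitely many
coefficients of valuation strictly smaller than `1/(p-1)`. -/
theorem stmt_13 (p : ℕ) (hp : p.Prime) (K : Type) [Field K] [CharZero K]
    (v : K → ℚ)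
    (hmul : ∀ x y : K, x ≠ 0 → y ≠ 0 → v (x * y) = v x + v y)
    (hadd : ∀ x y : K, x ≠ 0 → y ≠ 0 → x + y ≠ 0 → min (v x) (v y) ≤ v (x + y))
    (hvp : v (p : K) = 1)
    (B : ℚ) (hB : 0 < B)
    (f : PowerSeries K) (h0 : PowerSeries.constantCoeff f = 1)
    (hcoeff : ∀ j : ℕ, 1 ≤ j → PowerSeries.coeff j f ≠ 0 →
      B ≤ v (PowerSeries.coeff j f))
    (hfin : {j : ℕ | PowerSeries.coeff j (f ^ p) ≠ 0 ∧
        v (PowerSeries.coeff j (f ^ p)) < (p : ℚ) / ((p : ℚ) - 1)}.Finite) :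
    {j : ℕ | PowerSeries.coeff j f ≠ 0 ∧
        v (PowerSeries.coeff j f) < 1 / ((p : ℚ) - 1)}.Finite :=
  stmt_13_general p hp K v hmul hadd hvp B hB f h0 hcoeff hfin
end

section
/- Over a field K of characteristic prime to p containing a primitive p^s-th root of unity, the map (a_1,…,a_s) ↦ class of a_1 a_2^p ⋯ a_s^{p^{s−1}} induces a group isomorphism (K^×)^{⊕s}/φ_s((K^×)^{⊕s}) ≅ K^×/(K^×)^{p^s}, where φ_s(a_1,…,a_s) = (a_1^p, a_2^p a_1^{−1}, …, a_s^p a_{s−1}^{−1}). -/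
/-!
Write `e_i x` for the tuple with `x` in slot `i` and `1` elsewhere. Since
`φ (e_i x) = e_i (x ^ p) * e_{i+1} x⁻¹` and `φ (e_{s-1} x) = e_{s-1} (x ^ p)`, modulo the image
of `φ` we have `e_{i+1} x ≡ e_i (x ^ p)`, hence `a ≡ e_0 (∏ a_i ^ p ^ i)` for every `a`, and
`e_0 (y ^ p ^ s) ≡ e_{s-1} (y ^ p) ≡ 1`. Conversely the weighted product sends `φ c` to the
`p ^ s`-th power `c_{s-1} ^ p ^ s`. So the weighted product and `y ↦ e_0 y` descend to mutually
inverse homomorphisms between the two quotients.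
-/

/-- The map `φ_s (a_1, …, a_s) = (a_1^p, a_2^p a_1⁻¹, …, a_s^p a_{s-1}⁻¹)` on `(K^×)^s`
(as a subgroup given by the closure of its image, which is already a subgroup since `K^×`
is commutative). -/
def phiImage (p s : ℕ) (K : Type) [Field K] : Subgroup (Fin s → Kˣ) :=
  Subgroup.closure (Set.range fun a : Fin s → Kˣ =>
    fun i : Fin s => if (i : ℕ) = 0 then a i ^ p else a i ^ p * (a ⟨(i : ℕ) - 1, lt_of_le_of_lt (Nat.sub_le _ _) i.isLt⟩)⁻¹)

namespace Kummer

variable (G : Type*) [CommGroup G] (p s : ℕ)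

def phiHom : (Fin s → G) →* (Fin s → G) where
  toFun a i := if (i : ℕ) = 0 then a i ^ p
    else a i ^ p * (a ⟨(i : ℕ) - 1, lt_of_le_of_lt (Nat.sub_le _ _) i.isLt⟩)⁻¹
  map_one' := by ext; simp
  map_mul' a b := by
    ext i
    by_cases hi : (i : ℕ) = 0
    · simp [hi, mul_pow]
    · simp only [hi, if_false, Pi.mul_apply, mul_pow, mul_inv]
      exact mul_mul_mul_comm _ _ _ _

def weightedProdHom : (Fin s → G) →* G where
  toFun a := ∏ i : Fin s, a i ^ p ^ (i : ℕ)
  map_one' := by simp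
  map_mul' a b := by simp [mul_pow, Finset.prod_mul_distrib]

variable {G p s}

lemma weightedProdHom_mulSingle (i : Fin s) (x : G) :
    weightedProdHom G p s (Pi.mulSingle i x) = x ^ p ^ (i : ℕ) := by
  simp [weightedProdHom, Pi.mulSingle_apply]

lemma phiHom_mulSingle_of_val_eq_succ {i j : Fin s} (hij : (j : ℕ) = i + 1) (x : G) :
    phiHom G p s (Pi.mulSingle i x) = Pi.mulSingle i (x ^ p) * Pi.mulSingle j x⁻¹ := by
  ext k
  simp only [phiHom, MonoidHom.coe_mk, OneHom.coe_mk, Pi.mul_apply, Pi.mulSingle_apply,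
    Fin.ext_iff]
  split_ifs <;> first | omega | simp

lemma phiHom_mulSingle_of_val_succ_eq {i : Fin s} (hi : (i : ℕ) + 1 = s) (x : G) :
    phiHom G p s (Pi.mulSingle i x) = Pi.mulSingle i (x ^ p) := by
  ext k
  simp only [phiHom, MonoidHom.coe_mk, OneHom.coe_mk, Pi.mulSingle_apply, Fin.ext_iff]
  split_ifs <;> first | omega | simp

lemma weightedProdHom_comp_phiHom (hs : 0 < s) :
    (weightedProdHom G p s).comp (phiHom G p s) =
      (powMonoidHom (p ^ s)).comp (Pi.evalMonoidHom (fun _ => G) ⟨s - 1, by omega⟩) := by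
  refine MonoidHom.functions_ext _ _ _ fun i x => ?_
  simp only [MonoidHom.comp_apply, Pi.evalMonoidHom_apply, powMonoidHom_apply]
  by_cases hi : (i : ℕ) + 1 = s
  · have hlast : (⟨s - 1, by omega⟩ : Fin s) = i := Fin.ext (by simp only; omega)
    rw [phiHom_mulSingle_of_val_succ_eq hi, weightedProdHom_mulSingle, hlast,
      Pi.mulSingle_eq_same, ← pow_mul, ← pow_succ', hi]
  · have hj : (i : ℕ) + 1 < s := by omega
    have hne : (⟨s - 1, by omega⟩ : Fin s) ≠ i := fun h => hi <| by
      rw [← h]; simp only; omega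
    rw [phiHom_mulSingle_of_val_eq_succ (j := ⟨i + 1, hj⟩) rfl, map_mul,
      weightedProdHom_mulSingle, weightedProdHom_mulSingle, Pi.mulSingle_eq_of_ne hne, one_pow,
      ← pow_mul, ← pow_succ', inv_pow, mul_inv_cancel]

local notation "π" => QuotientGroup.mk' (MonoidHom.range (phiHom G p s))

lemma mk'_mulSingle_of_val_eq_succ {i j : Fin s} (hij : (j : ℕ) = i + 1) (x : G) :
    π (Pi.mulSingle j x) = π (Pi.mulSingle i (x ^ p)) := by
  rw [QuotientGroup.mk'_apply, QuotientGroup.mk'_apply, QuotientGroup.eq]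
  exact ⟨Pi.mulSingle i x, by
    rw [phiHom_mulSingle_of_val_eq_succ hij, Pi.mulSingle_inv, mul_comm]⟩

lemma mk'_mulSingle_eq_mk'_mulSingle_zero (i : Fin s) (x : G) :
    π (Pi.mulSingle i x) = π (Pi.mulSingle ⟨0, i.pos⟩ (x ^ p ^ (i : ℕ))) := by
  obtain ⟨n, hn⟩ := i
  induction n generalizing x with
  | zero => simp
  | succ n ih =>
    rw [mk'_mulSingle_of_val_eq_succ (i := ⟨n, by omega⟩) rfl, ih (x ^ p) (by omega),
      ← pow_mul, ← pow_succ']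

lemma mk'_mulSingle_zero_pow_eq_one (hs : 0 < s) (y : G) :
    π (Pi.mulSingle ⟨0, hs⟩ (y ^ p ^ s)) = 1 := by
  have hlast : ((⟨s - 1, by omega⟩ : Fin s) : ℕ) + 1 = s := by simp only; omega
  have hpow : y ^ p ^ s = (y ^ p) ^ p ^ (s - 1) := by
    rw [← pow_mul, ← pow_succ', Nat.sub_add_cancel hs]
  rw [hpow, ← mk'_mulSingle_eq_mk'_mulSingle_zero ⟨s - 1, by omega⟩,
    ← phiHom_mulSingle_of_val_succ_eq hlast, QuotientGroup.mk'_apply, QuotientGroup.eq_one_iff]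
  exact ⟨_, rfl⟩

lemma mk'_comp_mulSingle_zero_comp_weightedProdHom (hs : 0 < s) :
    MonoidHom.comp π ((MonoidHom.mulSingle _ ⟨0, hs⟩).comp (weightedProdHom G p s)) = π :=
  MonoidHom.functions_ext _ _ _ fun i x => by
    simp only [MonoidHom.comp_apply, MonoidHom.mulSingle_apply, weightedProdHom_mulSingle]
    exact (mk'_mulSingle_eq_mk'_mulSingle_zero i x).symm

variable (G p) in
def quotientPhiEquiv (hs : 0 < s) :
    (Fin s → G) ⧸ (phiHom G p s).range ≃* G ⧸ (powMonoidHom (p ^ s) : G →* G).range :=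
  MonoidHom.toMulEquiv
    (QuotientGroup.map _ _ (weightedProdHom G p s) <| by
      rintro _ ⟨c, rfl⟩
      rw [Subgroup.mem_comap, ← MonoidHom.comp_apply, weightedProdHom_comp_phiHom hs]
      exact ⟨_, rfl⟩)
    (QuotientGroup.lift _
      (MonoidHom.comp π (MonoidHom.mulSingle (fun _ : Fin s => G) ⟨0, hs⟩)) <| by
      rintro _ ⟨y, rfl⟩
      exact MonoidHom.mem_ker.mpr (mk'_mulSingle_zero_pow_eq_one hs y))
    (QuotientGroup.monoidHom_ext _ <| MonoidHom.ext fun a =>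
      DFunLike.congr_fun (mk'_comp_mulSingle_zero_comp_weightedProdHom hs) a)
    (QuotientGroup.monoidHom_ext _ <| MonoidHom.ext fun y => by
      simp [weightedProdHom_mulSingle])

end Kummer

lemma phiImage_eq_range_phiHom (p s : ℕ) (K : Type) [Field K] :
    phiImage p s K = (Kummer.phiHom Kˣ p s).range :=
  Subgroup.closure_eq (Kummer.phiHom Kˣ p s).range

theorem stmt_15_general (p s : ℕ) (hs : 1 ≤ s) (K : Type) [Field K] :
    ∃ e : ((Fin s → Kˣ) ⧸ phiImage p s K) ≃*
        (Kˣ ⧸ (MonoidHom.range (powMonoidHom (p ^ s) : Kˣ →* Kˣ))),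
      ∀ a : Fin s → Kˣ,
        e (QuotientGroup.mk a) = QuotientGroup.mk (∏ i : Fin s, a i ^ p ^ (i : ℕ)) :=
  ⟨(QuotientGroup.quotientMulEquivOfEq (phiImage_eq_range_phiHom p s K)).trans
    (Kummer.quotientPhiEquiv Kˣ p hs), fun _ => rfl⟩

/-- Kummer theory isomorphism: over a field `K` of characteristic prime to `p` containing
a primitive `p^s`-th root of unity, the map `(a_1, …, a_s) ↦ a_1 a_2^p ⋯ a_s^{p^{s-1}}`
induces a group isomorphism `(K^×)^{⊕s}/φ_s((K^×)^{⊕s}) ≅ K^×/(K^×)^{p^s}`, where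
`φ_s(a_1, …, a_s) = (a_1^p, a_2^p a_1^{-1}, …, a_s^p a_{s-1}^{-1})`. -/
theorem stmt_15 (p s : ℕ) (hp : p.Prime) (hs : 1 ≤ s) (K : Type) [Field K]
    (hchar : (p : K) ≠ 0) (ζ : K) (hζ : IsPrimitiveRoot ζ (p ^ s)) :
    ∃ e : ((Fin s → Kˣ) ⧸ phiImage p s K) ≃*
        (Kˣ ⧸ (MonoidHom.range (powMonoidHom (p ^ s) : Kˣ →* Kˣ))),
      ∀ a : Fin s → Kˣ,
        e (QuotientGroup.mk a) = QuotientGroup.mk (∏ i : Fin s, a i ^ p ^ (i : ℕ)) :=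
  stmt_15_general p s hs K
end

section
/- Let p be prime, ζ_p a primitive p-th root of unity, λ = ζ_p − 1, and R = ℤ_(p)[ζ_p]. The substitution Z_0 = 1 + λY_0 transforms the Kummer equation Z_0^p = 1 + pλX_0 into S_0(Y_0) = X_0 where S_0(Y_0) = Y_0 + (λ^{p−1}/p)Y_0^p + (1/p)Σ_{i=2}^{p−1} C(p,i) λ^{i−1} Y_0^i has coefficients in R, and S_0 reduces modulo λ to y_0 − y_0^p. -/
/-- The Artin–Schreier-type polynomial
`S₀(Y) = Y + (λ^{p-1}/p) Y^p + (1/p) Σ_{i=2}^{p-1} C(p,i) λ^{i-1} Y^i`, `λ = ζ_p - 1`. -/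
noncomputable def S0 (p : ℕ) {K : Type} [Field K] (ζ : K) : Polynomial K :=
  Polynomial.X + Polynomial.C ((ζ - 1) ^ (p - 1) / (p : K)) * Polynomial.X ^ p +
    ∑ i ∈ Finset.Icc 2 (p - 1),
      Polynomial.C ((p.choose i : K) * (ζ - 1) ^ (i - 1) / (p : K)) * Polynomial.X ^ i

/-- The subring `ℤ_(p)[ζ]` of `K`: generated by `ζ` and the inverses of the natural
numbers prime to `p`. -/
def Rloc (p : ℕ) {K : Type} [Field K] (ζ : K) : Subring K :=
  Subring.closure ({ζ} ∪ {x : K | ∃ m : ℕ, ¬ p ∣ m ∧ x * (m : K) = 1})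

/-!
Expanding `(1 + λY)^p` by the binomial theorem gives `(1 + λY)^p = 1 + pλ·S₀(Y)`. The middle
coefficients of `S₀` are integral because `p ∣ C(p,i)`. For the top one,
`∏_{k=1}^{p-1} (1 - ζ^k) = p` and `1 - ζ^k = -λ(1 + ζ + ⋯ + ζ^{k-1})` show that `λ^{p-1}/p` is
the inverse of the unit `v = (-1)^{p-1} ∏_{k=1}^{p-1} (1 + ζ + ⋯ + ζ^{k-1})` of `ℤ[ζ]`. Modulo `λ`
we have `ζ ≡ 1`, so `v ≡ (-1)^{p-1}(p-1)! ≡ -1` by Wilson's theorem (as `λ ∣ p`). Hence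
`λ^{p-1}/p ≡ -1` and `S₀ ≡ Y - Y^p`.
-/

open Polynomial Finset
open scoped Nat

lemma neg_one_pow_mul_factorial_eq_neg_one {Q : Type*} [CommRing Q] {p : ℕ} (hp : p.Prime)
    (hpQ : (p : Q) = 0) : (-1 : Q) ^ (p - 1) * ((p - 1)! : Q) = -1 := by
  have := Fact.mk hp
  obtain ⟨m, hm⟩ : (p : ℤ) ∣ (-1) ^ (p - 1) * (p - 1)! + 1 := by
    rw [← ZMod.intCast_zmod_eq_zero_iff_dvd]
    push_cast
    rw [ZMod.pow_card_sub_one_eq_one (neg_ne_zero.2 one_ne_zero), ZMod.wilsons_lemma]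
    ring
  have := congrArg (Int.cast : ℤ → Q) hm
  push_cast at this
  rw [hpQ, zero_mul] at this
  exact eq_neg_of_add_eq_zero_left this

def orderCofactor {A : Type*} [CommRing A] (ζ : A) (n : ℕ) : A :=
  (-1) ^ (n - 1) * ∏ k ∈ range (n - 1), ∑ i ∈ range (k + 1), ζ ^ i

namespace IsPrimitiveRoot

variable {A : Type*} [CommRing A] [IsDomain A] {ζ : A} {n p : ℕ}

lemma natCast_eq_sub_one_pow_mul_orderCofactor (hζ : IsPrimitiveRoot ζ n) (hn : n ≠ 0) :
    (n : A) = (ζ - 1) ^ (n - 1) * orderCofactor ζ n := by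
  obtain ⟨m, rfl⟩ : ∃ m, n = m + 1 := ⟨n - 1, by omega⟩
  rw [orderCofactor, Nat.add_sub_cancel, Nat.cast_succ, ← hζ.prod_pow_sub_one_eq_order]
  simp only [← geom_sum_mul, prod_mul_distrib, prod_const, card_range]
  ring

lemma isUnit_orderCofactor (hζ : IsPrimitiveRoot ζ p) (hp : p.Prime) :
    IsUnit (orderCofactor ζ p) := by
  refine (isUnit_neg_one.pow _).mul (IsUnit.prod_iff.2 fun k hk => ?_)
  have hkp : k + 1 < p := by have := mem_range.1 hk; omega
  exact hζ.geom_sum_isUnit hp.two_le (Nat.coprime_of_lt_prime k.succ_ne_zero hkp hp).symm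

lemma sub_one_dvd_orderCofactor_add_one (hζ : IsPrimitiveRoot ζ p) (hp : p.Prime) :
    ζ - 1 ∣ orderCofactor ζ p + 1 := by
  rw [← Ideal.Quotient.eq_zero_iff_dvd]
  set π := Ideal.Quotient.mk (Ideal.span {ζ - 1})
  have hπζ : π ζ = 1 := by
    rw [← sub_eq_zero, ← map_one π, ← map_sub, Ideal.Quotient.eq_zero_iff_dvd]
  have hπp : (p : A ⧸ Ideal.span {ζ - 1}) = 0 := by
    rw [← map_natCast π, Ideal.Quotient.eq_zero_iff_dvd]
    exact sub_one_dvd_natCast_of_pow_eq_one hζ.pow_eq_one (hζ.ne_one hp.one_lt)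
  have := neg_one_pow_mul_factorial_eq_neg_one hp hπp
  rw [← prod_range_add_one_eq_factorial] at this
  push_cast at this
  simp [orderCofactor, hπζ, map_prod, this]

lemma exists_sub_one_pow_eq_natCast_mul_sub_one_dvd_add_one (hζ : IsPrimitiveRoot ζ p)
    (hp : p.Prime) :
    ∃ w : A, (ζ - 1) ^ (p - 1) = p * w ∧ ζ - 1 ∣ w + 1 := by
  obtain ⟨v, hv⟩ := hζ.isUnit_orderCofactor hp
  obtain ⟨s, hs⟩ := hζ.sub_one_dvd_orderCofactor_add_one hp
  refine ⟨↑v⁻¹, ?_, ↑v⁻¹ * s, ?_⟩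
  · rw [hζ.natCast_eq_sub_one_pow_mul_orderCofactor hp.ne_zero, ← hv, mul_assoc,
      Units.mul_inv, mul_one]
  · rw [← hv] at hs
    linear_combination (↑v⁻¹ : A) * hs - Units.inv_mul v

end IsPrimitiveRoot

lemma exists_mem_sub_one_pow_div_add_one_eq_mul {K : Type*} [Field K] {ζ : K} {p : ℕ}
    (hζ : IsPrimitiveRoot ζ p) (hp : p.Prime) {R : Subring K} (hζR : ζ ∈ R) :
    ∃ t ∈ R, (ζ - 1) ^ (p - 1) / p + 1 = (ζ - 1) * t := by
  have hζ' : IsPrimitiveRoot (⟨ζ, hζR⟩ : R) p := IsPrimitiveRoot.coe_submonoidClass_iff.1 hζ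
  obtain ⟨w, hw, s, hs⟩ := hζ'.exists_sub_one_pow_eq_natCast_mul_sub_one_dvd_add_one hp
  have hw' := congrArg Subtype.val hw
  have hs' := congrArg Subtype.val hs
  push_cast at hw' hs'
  have hpK : (p : K) ≠ 0 := by
    intro h
    rw [h, zero_mul, pow_eq_zero_iff (Nat.sub_ne_zero_of_lt hp.one_lt), sub_eq_zero] at hw'
    exact hζ.ne_one hp.one_lt hw'
  refine ⟨s, s.2, ?_⟩
  rw [hw', mul_div_cancel_left₀ _ hpK, hs']

lemma S0_eq_sum_Icc {K : Type} [Field K] {p : ℕ} (hp : 2 ≤ p) (hpK : (p : K) ≠ 0) (ζ : K) :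
    S0 p ζ = ∑ i ∈ Icc 1 p, C ((p.choose i : K) * (ζ - 1) ^ (i - 1) / p) * X ^ i := by
  have hIcc : Icc 1 p = insert 1 (insert p (Icc 2 (p - 1))) := by
    ext i; simp only [mem_Icc, mem_insert]; omega
  rw [hIcc, sum_insert (by simp only [mem_insert, mem_Icc]; omega),
    sum_insert (by simp only [mem_Icc]; omega), S0]
  simp [div_self hpK, add_assoc]

lemma one_add_C_mul_X_pow_eq_one_add_C_mul_S0 {K : Type} [Field K] {p : ℕ} (hp : 2 ≤ p)
    (hpK : (p : K) ≠ 0) (ζ : K) :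
    (1 + C (ζ - 1) * X) ^ p = 1 + C (p * (ζ - 1)) * S0 p ζ := by
  rw [S0_eq_sum_Icc hp hpK, mul_sum, add_comm, add_pow, range_eq_Ico,
    sum_eq_sum_Ico_succ_bot (by omega), zero_add, Finset.Ico_add_one_right_eq_Icc]
  congr 1
  · simp
  refine sum_congr rfl fun i hi => ?_
  obtain ⟨j, rfl⟩ : ∃ j, i = j + 1 := ⟨i - 1, by have := (mem_Icc.1 hi).1; omega⟩
  rw [one_pow, mul_one, mul_pow, ← C_pow, ← C_eq_natCast, ← mul_assoc, mul_right_comm,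
    ← C_mul, ← C_mul, Nat.add_sub_cancel]
  congr 2
  field_simp
  ring

lemma exists_S0_eq_X_sub_X_pow_add_C_sub_one_mul {K : Type} [Field K] {p : ℕ} (hp : p.Prime)
    (hpK : (p : K) ≠ 0) {ζ t : K} {R : Subring K} (hζR : ζ ∈ R) (htR : t ∈ R)
    (ht : (ζ - 1) ^ (p - 1) / p + 1 = (ζ - 1) * t) :
    ∃ Q ∈ lifts R.subtype, S0 p ζ = X - X ^ p + C (ζ - 1) * Q := by
  have hζ1R : ζ - 1 ∈ R := sub_mem hζR (one_mem R)
  refine ⟨C t * X ^ p +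
      ∑ i ∈ Icc 2 (p - 1), C (((p.choose i / p : ℕ) : K) * (ζ - 1) ^ (i - 2)) * X ^ i,
    ?_, ?_⟩
  · refine add_mem (mul_mem (C'_mem_lifts ⟨⟨t, htR⟩, rfl⟩) (X_pow_mem_lifts _ _))
      (sum_mem fun i _ => mul_mem (C'_mem_lifts ⟨⟨_, ?_⟩, rfl⟩) (X_pow_mem_lifts _ _))
    exact mul_mem (natCast_mem R _) (pow_mem hζ1R _)
  have hterm : ∀ i ∈ Icc 2 (p - 1), C ((p.choose i : K) * (ζ - 1) ^ (i - 1) / p) * X ^ i =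
      C (ζ - 1) * (C (((p.choose i / p : ℕ) : K) * (ζ - 1) ^ (i - 2)) * X ^ i) := by
    intro i hi
    obtain ⟨hi2, hip⟩ := mem_Icc.1 hi
    obtain ⟨j, rfl⟩ : ∃ j, i = j + 2 := ⟨i - 2, by omega⟩
    rw [Nat.cast_div (hp.dvd_choose_self (by omega) (by omega)) hpK, ← mul_assoc, ← C_mul,
      show j + 2 - 1 = j + 1 by omega, Nat.add_sub_cancel]
    congr 2
    field_simp
    ring
  rw [S0, sum_congr rfl hterm, mul_add, mul_sum, ← mul_assoc, ← C_mul, ← ht, C_add, C_1]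
  ring

lemma self_mem_Rloc (p : ℕ) {K : Type} [Field K] (ζ : K) : ζ ∈ Rloc p ζ :=
  Subring.subset_closure (Or.inl rfl)

/-- The substitution `Z₀ = 1 + λ Y₀` transforms the Kummer equation `Z₀^p = 1 + pλX₀` into
`S₀(Y₀) = X₀`, i.e. `(1 + λY₀)^p = 1 + pλ·S₀(Y₀)`; moreover `S₀` has all of its
coefficients in `R = ℤ_(p)[ζ_p]`, and `S₀` reduces modulo `λ` to `y₀ - y₀^p`. -/
theorem stmt_16 (p : ℕ) (hp : p.Prime) (K : Type) [Field K] [CharZero K]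
    (ζ : K) (hζ : IsPrimitiveRoot ζ p) :
    (1 + Polynomial.C (ζ - 1) * Polynomial.X) ^ p =
        1 + Polynomial.C ((p : K) * (ζ - 1)) * S0 p ζ ∧
    (∀ n : ℕ, (S0 p ζ).coeff n ∈ Rloc p ζ) ∧
    (∀ n : ℕ, ∃ t ∈ Rloc p ζ,
      (S0 p ζ).coeff n - (Polynomial.X - Polynomial.X ^ p : Polynomial K).coeff n =
        (ζ - 1) * t) := by
  have hpK : (p : K) ≠ 0 := Nat.cast_ne_zero.2 hp.ne_zero
  have hζR := self_mem_Rloc p ζ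
  obtain ⟨t, htR, ht⟩ := exists_mem_sub_one_pow_div_add_one_eq_mul hζ hp hζR
  obtain ⟨_, ⟨Q, rfl⟩, hS0⟩ := exists_S0_eq_X_sub_X_pow_add_C_sub_one_mul hp hpK hζR htR ht
  have hS0map : S0 p ζ =
      (X - X ^ p + C (⟨ζ - 1, sub_mem hζR (one_mem _)⟩ : Rloc p ζ) * Q).map (Rloc p ζ).subtype := by
    simp [hS0]
  refine ⟨one_add_C_mul_X_pow_eq_one_add_C_mul_S0 hp.two_le hpK ζ, fun n => ?_,
    fun n => ⟨Q.coeff n, SetLike.coe_mem _, ?_⟩⟩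
  · rw [hS0map, coeff_map]
    exact SetLike.coe_mem _
  · rw [hS0, coeff_add, add_sub_cancel_left, coeff_C_mul, coe_mapRingHom, coeff_map]
    rfl
end
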